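/- arXiv:2302.03169 — 4 statements merged into one kernel-verified Lean document; each statement's English description precedes it below -/
import Mathlib

section
/- Let z_1,...,z_N be i.i.d. from q on a finite set Z with q > 0, and given these, draw Y from the categorical distribution over {z_1,...,z_N} with probabilities proportional to w_i = p(z_i)/q(z_i). Then for every z ∈ Z, P(Y = z) → p(z) as N → ∞. -/
open scoped Classical

open MeasureTheory ProbabilityTheory Filter

open Finset Topology

/-!
By the strong law of large numbers, `(1/N) ∑ w(zᵢ) 1[zᵢ = z] → E_q[w 1_z] = p z` and
`(1/N) ∑ w(zᵢ) → E_q[w] = 1` almost surely, where `w = p / q`; hence the normalized weight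
of `z` tends to `p z` almost surely. It lies in `[0, 1]`, so dominated convergence passes the
limit through the expectation.
-/

section

variable {Ω Z : Type*} [MeasurableSpace Ω] [MeasurableSpace Z] [MeasurableSingletonClass Z]
  {μ : Measure Ω}

lemma identDistrib_of_measure_preimage_singleton_eq [Countable Z] {X Y : Ω → Z}
    (hX : Measurable X) (hY : Measurable Y)
    (h : ∀ z, μ {ω | X ω = z} = μ {ω | Y ω = z}) : IdentDistrib X Y μ μ where
  aemeasurable_fst := hX.aemeasurable
  aemeasurable_snd := hY.aemeasurable
  map_eq := Measure.ext_of_singleton fun z => by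
    rw [Measure.map_apply hX (measurableSet_singleton z),
      Measure.map_apply hY (measurableSet_singleton z)]
    exact h z

lemma integrable_comp_of_finite [Finite Z] [IsFiniteMeasure μ] {Y : Ω → Z}
    (hY : Measurable Y) (g : Z → ℝ) : Integrable (fun ω => g (Y ω)) μ :=
  (integrable_map_measure (measurable_of_finite g).aestronglyMeasurable hY.aemeasurable).mp
    .of_finite

lemma integral_comp_eq_sum [Fintype Z] [IsFiniteMeasure μ] {Y : Ω → Z}
    (hY : Measurable Y) (g : Z → ℝ) :
    ∫ ω, g (Y ω) ∂μ = ∑ z, μ.real {ω | Y ω = z} * g z := by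
  rw [← integral_map hY.aemeasurable (measurable_of_finite g).aestronglyMeasurable,
    integral_fintype .of_finite]
  refine sum_congr rfl fun z _ => ?_
  rw [map_measureReal_apply hY (measurableSet_singleton z), smul_eq_mul]
  rfl

lemma ae_tendsto_avg_comp [Finite Z] [IsProbabilityMeasure μ] {X : ℕ → Ω → Z}
    (hindep : Pairwise fun i j => IndepFun (X i) (X j) μ)
    (hident : ∀ i, IdentDistrib (X i) (X 0) μ μ) (hX : Measurable (X 0)) (g : Z → ℝ) :
    ∀ᵐ ω ∂μ, Tendsto (fun N : ℕ => (∑ i ∈ range N, g (X i ω)) / N) atTop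
      (𝓝 (∫ ω, g (X 0 ω) ∂μ)) :=
  have hg := measurable_of_finite g
  strong_law_ae_real (fun i ω => g (X i ω)) (integrable_comp_of_finite hX g)
    (fun _ _ hij => (hindep hij).comp hg hg) fun i => (hident i).comp hg

end

lemma tendsto_div_of_tendsto_div_natCast {s t : ℕ → ℝ} {a b : ℝ} (hb : b ≠ 0)
    (hs : Tendsto (fun N : ℕ => s N / N) atTop (𝓝 a))
    (ht : Tendsto (fun N : ℕ => t N / N) atTop (𝓝 b)) :
    Tendsto (fun N => s N / t N) atTop (𝓝 (a / b)) := by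
  refine (hs.div ht hb).congr' ?_
  filter_upwards [eventually_ne_atTop 0] with N hN
  exact div_div_div_cancel_right₀ (Nat.cast_ne_zero.mpr hN) _ _

lemma tendsto_integral_of_ae_tendsto_of_mem_unitInterval {Ω : Type*} [MeasurableSpace Ω]
    {μ : Measure Ω} [IsProbabilityMeasure μ] {f : ℕ → Ω → ℝ} {c : ℝ}
    (hmeas : ∀ N, AEStronglyMeasurable (f N) μ) (hf : ∀ N ω, f N ω ∈ Set.Icc 0 1)
    (hlim : ∀ᵐ ω ∂μ, Tendsto (fun N => f N ω) atTop (𝓝 c)) :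
    Tendsto (fun N => ∫ ω, f N ω ∂μ) atTop (𝓝 c) := by
  have := tendsto_integral_of_dominated_convergence (fun _ => 1) hmeas (integrable_const 1)
    (fun N => .of_forall fun ω => abs_le.mpr ⟨by linarith [(hf N ω).1], (hf N ω).2⟩) hlim
  simpa using this

lemma sum_ite_div_sum_mem_Icc {ι : Type*} (s : Finset ι) (P : ι → Prop) [DecidablePred P]
    {w : ι → ℝ} (hw : ∀ i ∈ s, 0 ≤ w i) :
    (∑ i ∈ s, if P i then w i else 0) / ∑ i ∈ s, w i ∈ Set.Icc 0 1 := by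
  have hnum : 0 ≤ ∑ i ∈ s, if P i then w i else 0 :=
    sum_nonneg fun i hi => by split_ifs <;> simp [hw i hi]
  have hle : (∑ i ∈ s, if P i then w i else 0) ≤ ∑ i ∈ s, w i :=
    sum_le_sum fun i hi => by split_ifs <;> simp [hw i hi]
  exact ⟨div_nonneg hnum (hnum.trans hle), div_le_one_of_le₀ hle (hnum.trans hle)⟩

theorem stmt_3_general {Z : Type*} [Fintype Z] [MeasurableSpace Z] [MeasurableSingletonClass Z]
    (p q : Z → ℝ) (hq : ∀ z, 0 < q z)
    (hp : ∀ z, 0 ≤ p z) (hpsum : ∑ z, p z = 1)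
    {Ω : Type*} [MeasurableSpace Ω] (μ : Measure Ω) [IsProbabilityMeasure μ]
    (X : ℕ → Ω → Z) (hXmeas : ∀ n, Measurable (X n))
    (hindep : iIndepFun X μ)
    (hlaw : ∀ n z, μ {ω | X n ω = z} = ENNReal.ofReal (q z)) :
    ∀ z : Z, Tendsto
      (fun N => ∫ ω,
          (∑ i ∈ Finset.range N, if X i ω = z then p (X i ω) / q (X i ω) else 0) /
          (∑ i ∈ Finset.range N, p (X i ω) / q (X i ω)) ∂μ)
      atTop (nhds (p z)) := by
  intro z
  have hlaw_real (n : ℕ) (w : Z) : μ.real {ω | X n ω = w} = q w := by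
    rw [measureReal_def, hlaw, ENNReal.toReal_ofReal (hq w).le]
  have hident (i : ℕ) : IdentDistrib (X i) (X 0) μ μ :=
    identDistrib_of_measure_preimage_singleton_eq (hXmeas i) (hXmeas 0) fun w => by
      rw [hlaw, hlaw]
  have hlln (g : Z → ℝ) : ∀ᵐ ω ∂μ,
      Tendsto (fun N : ℕ => (∑ i ∈ range N, g (X i ω)) / N) atTop (𝓝 (∑ w, q w * g w)) := by
    simpa only [integral_comp_eq_sum (hXmeas 0), hlaw_real] using
      ae_tendsto_avg_comp (fun _ _ hij => hindep.indepFun hij) hident (hXmeas 0) g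
  have hmass_z : ∑ w, q w * (if w = z then p w / q w else 0) = p z := by
    simp [mul_div_cancel₀ _ (hq z).ne']
  have hmass : ∑ w, q w * (p w / q w) = 1 := by
    simp_rw [mul_div_cancel₀ _ (hq _).ne', hpsum]
  refine tendsto_integral_of_ae_tendsto_of_mem_unitInterval (fun N => ?_)
    (fun N ω => sum_ite_div_sum_mem_Icc _ _ fun i _ => div_nonneg (hp _) (hq _).le) ?_
  · have hcomp (g : Z → ℝ) (i : ℕ) : Measurable fun ω => g (X i ω) :=
      (measurable_of_finite g).comp (hXmeas i)
    exact Measurable.aestronglyMeasurable <|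
      (Finset.measurable_sum _ fun i _ => hcomp (fun w => if w = z then p w / q w else 0) i).div
        (Finset.measurable_sum _ fun i _ => hcomp (fun w => p w / q w) i)
  · filter_upwards [hlln fun w => if w = z then p w / q w else 0, hlln fun w => p w / q w]
      with ω hnum hden
    rw [hmass_z] at hnum
    rw [hmass] at hden
    simpa only [div_one] using tendsto_div_of_tendsto_div_natCast one_ne_zero hnum hden

/-- Importance resampling (single sample): `P(Y = z) → p(z)` as `N → ∞`, where `Y` is drawn
from the categorical distribution over the i.i.d. `q`-samples with probabilities
proportional to `w_i = p(z_i)/q(z_i)`; `P(Y = z)` is the expectation of the normalized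
weight mass on samples equal to `z`. -/
theorem stmt_3 {Z : Type*} [Fintype Z] [MeasurableSpace Z] [MeasurableSingletonClass Z]
    (p q : Z → ℝ) (hq : ∀ z, 0 < q z) (hqsum : ∑ z, q z = 1)
    (hp : ∀ z, 0 ≤ p z) (hpsum : ∑ z, p z = 1)
    {Ω : Type*} [MeasurableSpace Ω] (μ : Measure Ω) [IsProbabilityMeasure μ]
    (X : ℕ → Ω → Z) (hXmeas : ∀ n, Measurable (X n))
    (hindep : iIndepFun X μ)
    (hlaw : ∀ n z, μ {ω | X n ω = z} = ENNReal.ofReal (q z)) :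
    ∀ z : Z, Tendsto
      (fun N => ∫ ω,
          (∑ i ∈ Finset.range N, if X i ω = z then p (X i ω) / q (X i ω) else 0) /
          (∑ i ∈ Finset.range N, p (X i ω) / q (X i ω)) ∂μ)
      atTop (nhds (p z)) :=
  stmt_3_general p q hq hp hpsum μ X hXmeas hindep hlaw
end

section
/- Let G_1,...,G_N be i.i.d. standard Gumbel and w_1,...,w_N > 0. The indices of the k largest values of log w_i + G_i (in decreasing order) have the same joint distribution as sequential sampling without replacement from the categorical distribution with probabilities w_i/∑_j w_j: i.e., P(ordered top-k = (i_1,...,i_k)) = ∏_{t=1}^k w_{i_t} / (∑_j w_j − ∑_{s<t} w_{i_s}). -/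
/-!
Setting `Y j = exp (-(log w j + G j))` turns the scores into independent exponential clocks with
rates `w j`, and the top-`k` event into "the clocks `i 0, …, i (k-1)` ring first, in this order".
We show by induction on `k` that this happens with all clocks ringing after `t ≥ 0` with
probability `exp (-W t) · ∏ …`, where `W = ∑ j, w j`. Integrating out the ringing time `y > t` of
`i 0` leaves the same race among the other clocks after time `y`, whose probability is by
induction `exp (-(W - w (i 0)) y)` times their sampling product; the remaining factor comes from
`∫_t^∞ w (i 0) e^{-w (i 0) y} e^{-(W - w (i 0)) y} dy = (w (i 0) / W) e^{-W t}`.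
-/

open MeasureTheory ProbabilityTheory Set Function

lemma setLIntegral_Ioi_expMeasure_exp {r c t : ℝ} (hr : 0 ≤ r) (hrc : 0 < r + c)
    (ht : 0 ≤ t) :
    ∫⁻ y in Ioi t, ENNReal.ofReal (Real.exp (-(c * y))) ∂expMeasure r =
      ENNReal.ofReal (r / (r + c) * Real.exp (-((r + c) * t))) := by
  have hpdf : Measurable (exponentialPDF r) :=
    (measurable_exponentialPDFReal r).ennreal_ofReal
  rw [show expMeasure r = volume.withDensity (exponentialPDF r) from rfl,
    setLIntegral_withDensity_eq_setLIntegral_mul _ hpdf (by fun_prop) measurableSet_Ioi]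
  have hint : IntegrableOn (fun y => r * Real.exp (-(r + c) * y)) (Ioi t) :=
    (integrableOn_exp_mul_Ioi (by linarith) t).const_mul r
  calc ∫⁻ y in Ioi t, (exponentialPDF r * fun y => ENNReal.ofReal (Real.exp (-(c * y)))) y
      = ∫⁻ y in Ioi t, ENNReal.ofReal (r * Real.exp (-(r + c) * y)) := by
        refine setLIntegral_congr_fun measurableSet_Ioi fun y hy => ?_
        rw [Pi.mul_apply, exponentialPDF_of_nonneg (ht.trans (le_of_lt hy)),
          ← ENNReal.ofReal_mul (by positivity), mul_assoc, ← Real.exp_add]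
        ring_nf
    _ = ENNReal.ofReal (r / (r + c) * Real.exp (-((r + c) * t))) := by
        rw [← ofReal_integral_eq_lintegral_ofReal hint (ae_of_all _ fun y => by positivity),
          integral_const_mul, integral_exp_mul_Ioi (by linarith)]
        congr 1
        field_simp

lemma expMeasure_Ioi {r t : ℝ} (hr : 0 < r) (ht : 0 ≤ t) :
    expMeasure r (Ioi t) = ENNReal.ofReal (Real.exp (-(r * t))) := by
  simpa [hr.ne'] using setLIntegral_Ioi_expMeasure_exp (c := 0) hr.le (by simpa) ht

lemma expMeasure_Ici {r t : ℝ} (hr : 0 < r) (ht : 0 ≤ t) :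
    expMeasure r (Ici t) = ENNReal.ofReal (Real.exp (-(r * t))) := by
  have hatom : expMeasure r {t} = 0 :=
    withDensity_absolutelyContinuous _ _ Real.volume_singleton
  rw [← measure_congr (Ioi_ae_eq_Ici' hatom), expMeasure_Ioi hr ht]

lemma map_exp_neg_log_add_eq_expMeasure {Ω : Type*} [MeasurableSpace Ω] (μ : Measure Ω)
    [IsProbabilityMeasure μ] {g : Ω → ℝ} (hg : Measurable g)
    (hcdf : ∀ t, μ {ω | g ω ≤ t} = ENNReal.ofReal (Real.exp (-Real.exp (-t))))
    {w : ℝ} (hw : 0 < w) :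
    μ.map (fun ω => Real.exp (-(Real.log w + g ω))) = expMeasure w := by
  have := isProbabilityMeasure_expMeasure hw
  refine Measure.ext_of_Ici _ _ fun x => ?_
  rw [Measure.map_apply (by fun_prop) measurableSet_Ici]
  rcases le_or_gt x 0 with hx | hx
  · have hall : (fun ω => Real.exp (-(Real.log w + g ω))) ⁻¹' Ici x = univ :=
      eq_univ_of_forall fun ω => hx.trans (Real.exp_pos _).le
    refine hall ▸ measure_univ.trans (le_antisymm ?_ prob_le_one)
    calc 1 = expMeasure w (Ici 0) := by simp [expMeasure_Ici hw le_rfl]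
      _ ≤ expMeasure w (Ici x) := measure_mono (Ici_subset_Ici.2 hx)
  · have hpre : (fun ω => Real.exp (-(Real.log w + g ω))) ⁻¹' Ici x =
        {ω | g ω ≤ -Real.log (w * x)} := by
      ext ω
      rw [mem_preimage, mem_Ici, ← Real.log_le_iff_le_exp hx, Real.log_mul hw.ne' hx.ne',
        mem_ofPred]
      constructor <;> intro h <;> linarith
    rw [hpre, hcdf, neg_neg, Real.exp_log (by positivity), expMeasure_Ici hw hx.le]

section Race

variable {ι : Type*} {k : ℕ}

def firstArrivalsAfter (t : ℝ) (i : Fin k → ι) : Set (ι → ℝ) :=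
  {x | (∀ j, t < x j) ∧ StrictMono (x ∘ i) ∧ ∀ j ∉ range i, ∀ m, x (i m) < x j}

lemma measurableSet_firstArrivalsAfter [Countable ι] (t : ℝ) (i : Fin k → ι) :
    MeasurableSet (firstArrivalsAfter t i) := by
  simp only [firstArrivalsAfter, StrictMono, ofPred_and, ofPred_forall]
  measurability

variable [Fintype ι]

noncomputable def seqSamplingProb (w : ι → ℝ) (i : Fin k → ι) : ℝ :=
  ∏ t : Fin k, w (i t) / ((∑ j, w j) - ∑ s ∈ Finset.univ.filter (fun s => s < t), w (i s))

lemma pi_expMeasure_univ_pi_Ioi (w : ι → ℝ) (hw : ∀ j, 0 < w j) {t : ℝ} (ht : 0 ≤ t) :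
    Measure.pi (fun j => expMeasure (w j)) (univ.pi fun _ => Ioi t) =
      ENNReal.ofReal (Real.exp (-((∑ j, w j) * t))) := by
  have := fun j => isProbabilityMeasure_expMeasure (hw j)
  rw [Measure.pi_pi, Finset.sum_mul, ← Finset.sum_neg_distrib, Real.exp_sum,
    ENNReal.ofReal_prod_of_nonneg fun j _ => (Real.exp_pos _).le]
  exact Finset.prod_congr rfl fun j _ => expMeasure_Ioi (hw j) ht

variable [DecidableEq ι]

def tailCompl {i : Fin (k + 1) → ι} (hi : Injective i) : Fin k → Finset.univ.erase (i 0) :=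
  fun m => ⟨i m.succ, Finset.mem_erase.2 ⟨hi.ne m.succ_ne_zero, Finset.mem_univ _⟩⟩

lemma tailCompl_injective {i : Fin (k + 1) → ι} (hi : Injective i) :
    Injective (tailCompl hi) :=
  fun _ _ h => Fin.succ_injective _ (hi (congrArg Subtype.val h))

lemma mem_firstArrivalsAfter_succ_iff {t : ℝ} {i : Fin (k + 1) → ι} (hi : Injective i)
    (x : ι → ℝ) : x ∈ firstArrivalsAfter t i ↔
      t < x (i 0) ∧ (fun j : Finset.univ.erase (i 0) => x j) ∈
        firstArrivalsAfter (x (i 0)) (tailCompl hi) := by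
  have hrange : ∀ j (hj : j ∈ Finset.univ.erase (i 0)),
      ⟨j, hj⟩ ∈ range (tailCompl hi) ↔ j ∈ range i := by
    intro j hj
    refine ⟨fun ⟨m, hm⟩ => ⟨m.succ, congrArg Subtype.val hm⟩, fun ⟨m, hm⟩ => ?_⟩
    cases m using Fin.cases with
    | zero => exact absurd hm.symm (Finset.ne_of_mem_erase hj)
    | succ m => exact ⟨m, Subtype.ext hm⟩
  constructor
  · rintro ⟨hge, hmono, hlast⟩
    refine ⟨hge _, ⟨fun ⟨j, hj⟩ => ?_, fun a b hab => hmono (Fin.succ_lt_succ_iff.2 hab),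
      fun ⟨j, hj⟩ hj' m => hlast j (by rwa [← hrange j hj]) m.succ⟩⟩
    by_cases hji : j ∈ range i
    · obtain ⟨m, rfl⟩ := hji
      cases m using Fin.cases with
      | zero => exact absurd rfl (Finset.ne_of_mem_erase hj)
      | succ m => exact hmono m.succ_pos
    · exact hlast j hji 0
  · rintro ⟨h0, hge, hmono, hlast⟩
    have hfirst : ∀ j ≠ i 0, x (i 0) < x j := fun j hj =>
      hge ⟨j, Finset.mem_erase.2 ⟨hj, Finset.mem_univ _⟩⟩
    refine ⟨fun j => ?_, fun a b hab => ?_, fun j hj m => ?_⟩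
    · by_cases hj : j = i 0
      · exact hj ▸ h0
      · exact h0.trans (hfirst j hj)
    · cases b using Fin.cases with
      | zero => exact absurd hab (Fin.not_lt_zero a)
      | succ b =>
        cases a using Fin.cases with
        | zero => exact hfirst _ (hi.ne b.succ_ne_zero)
        | succ a => exact hmono (Fin.succ_lt_succ_iff.1 hab)
    · have hj0 : j ≠ i 0 := fun h => hj ⟨0, h.symm⟩
      cases m using Fin.cases with
      | zero => exact hfirst j hj0
      | succ m =>
        exact hlast ⟨j, Finset.mem_erase.2 ⟨hj0, Finset.mem_univ _⟩⟩ (by rwa [hrange]) m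

lemma seqSamplingProb_succ (w : ι → ℝ) {i : Fin (k + 1) → ι} (hi : Injective i) :
    seqSamplingProb w i = w (i 0) / (∑ j, w j) *
      seqSamplingProb (fun j : Finset.univ.erase (i 0) => w j) (tailCompl hi) := by
  have hsum : ∑ j : Finset.univ.erase (i 0), w j = (∑ j, w j) - w (i 0) := by
    rw [Finset.sum_coe_sort, Finset.sum_erase_eq_sub (Finset.mem_univ _)]
  have hprefix : ∀ m : Fin k, ∑ s ∈ Finset.univ.filter (fun s => s < m.succ), w (i s) =
      w (i 0) + ∑ s ∈ Finset.univ.filter (fun s => s < m), w (i s.succ) := by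
    intro m
    simp only [Finset.sum_filter, Fin.sum_univ_succ, Fin.succ_pos, if_true, Fin.succ_lt_succ_iff]
  rw [seqSamplingProb, Fin.prod_univ_succ, seqSamplingProb, hsum]
  congr 1
  · simp
  · refine Finset.prod_congr rfl fun m _ => ?_
    rw [hprefix, sub_sub]
    rfl

lemma preimage_updateFinset_update_firstArrivalsAfter {t : ℝ} {i : Fin (k + 1) → ι}
    (hi : Injective i) (x : ι → ℝ) (y : ℝ) :
    updateFinset (update x (i 0) y) _ ⁻¹' firstArrivalsAfter t i =
      {z | t < y ∧ z ∈ firstArrivalsAfter y (tailCompl hi)} := by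
  ext z
  simp only [mem_preimage, mem_firstArrivalsAfter_succ_iff hi]
  simp [updateFinset_def]

lemma MeasureTheory.Measure.pi_apply_eq_lintegral_erase {X : ι → Type*}
    [∀ j, MeasurableSpace (X j)] (μ : ∀ j, Measure (X j)) [∀ j, SigmaFinite (μ j)]
    {A : Set (∀ j, X j)} (hA : MeasurableSet A) (p : ι) (x : ∀ j, X j) :
    Measure.pi μ A = ∫⁻ y, Measure.pi (fun j : Finset.univ.erase p => μ j)
      (updateFinset (update x p y) _ ⁻¹' A) ∂μ p := by
  rw [← lintegral_indicator_one hA, lintegral_eq_lmarginal_univ x,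
    lmarginal_erase _ (measurable_one.indicator hA) (Finset.mem_univ p)]
  refine lintegral_congr fun y => ?_
  rw [lmarginal, ← lintegral_indicator_one (hA.preimage measurable_updateFinset)]
  rfl

theorem pi_expMeasure_firstArrivalsAfter (w : ι → ℝ) (hw : ∀ j, 0 < w j) (i : Fin k → ι)
    (hi : Injective i) {t : ℝ} (ht : 0 ≤ t) :
    Measure.pi (fun j => expMeasure (w j)) (firstArrivalsAfter t i) =
      ENNReal.ofReal (Real.exp (-((∑ j, w j) * t)) * seqSamplingProb w i) := by
  have hprob := fun j => isProbabilityMeasure_expMeasure (hw j)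
  induction k generalizing ι t with
  | zero =>
    have hbox : firstArrivalsAfter t i = univ.pi fun _ => Ioi t := by
      ext x
      simp [firstArrivalsAfter, Subsingleton.strictMono]
    rw [hbox, pi_expMeasure_univ_pi_Ioi w hw ht, seqSamplingProb, Fin.prod_univ_zero, mul_one]
  | succ k ih =>
    have hW : ∑ j, w j = w (i 0) + ∑ j : Finset.univ.erase (i 0), w j := by
      rw [Finset.sum_coe_sort (Finset.univ.erase (i 0)) w,
        Finset.add_sum_erase _ _ (Finset.mem_univ _)]
    rw [seqSamplingProb_succ w hi, hW]
    set W' := ∑ j : Finset.univ.erase (i 0), w j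
    set P' := seqSamplingProb (fun j : Finset.univ.erase (i 0) => w j) (tailCompl hi)
    have hp := hw (i 0)
    have hW' : 0 ≤ W' := Finset.sum_nonneg fun j _ => (hw j).le
    have hslice : ∀ y : ℝ, Measure.pi (fun j : Finset.univ.erase (i 0) => expMeasure (w j))
        (updateFinset (update (0 : ι → ℝ) (i 0) y) _ ⁻¹' firstArrivalsAfter t i) =
        (Ioi t).indicator
          (fun y => ENNReal.ofReal (Real.exp (-(W' * y))) * ENNReal.ofReal P') y := by
      intro y
      rw [preimage_updateFinset_update_firstArrivalsAfter hi]
      by_cases hy : t < y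
      · simp only [hy, true_and, ofPred_mem_eq, indicator_of_mem (mem_Ioi.2 hy),
          ← ENNReal.ofReal_mul (Real.exp_pos _).le]
        exact ih (ι := Finset.univ.erase (i 0)) (fun j => w j) (fun j => hw j) _
          (tailCompl_injective hi) (ht.trans hy.le) fun j => hprob j
      · simp [hy]
    calc Measure.pi (fun j => expMeasure (w j)) (firstArrivalsAfter t i)
        = (∫⁻ y in Ioi t, ENNReal.ofReal (Real.exp (-(W' * y))) ∂expMeasure (w (i 0))) *
            ENNReal.ofReal P' := by
          rw [Measure.pi_apply_eq_lintegral_erase _ (measurableSet_firstArrivalsAfter t i) (i 0) 0]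
          simp_rw [hslice]
          rw [lintegral_indicator measurableSet_Ioi, lintegral_mul_const _ (by fun_prop)]
      _ = ENNReal.ofReal (w (i 0) / (w (i 0) + W') * Real.exp (-((w (i 0) + W') * t))) *
            ENNReal.ofReal P' := by
          rw [setLIntegral_Ioi_expMeasure_exp hp.le (by linarith) ht]
      _ = _ := by
          rw [← ENNReal.ofReal_mul (by positivity)]
          congr 1
          field_simp

end Race

theorem stmt_5_general {Ω : Type*} [MeasurableSpace Ω] (μ : Measure Ω) [IsProbabilityMeasure μ]
    (N : ℕ) (G : Fin N → Ω → ℝ) (hGmeas : ∀ i, Measurable (G i))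
    (hindep : iIndepFun G μ)
    (hgumbel : ∀ i t, μ {ω | G i ω ≤ t} = ENNReal.ofReal (Real.exp (-Real.exp (-t))))
    (w : Fin N → ℝ) (hw : ∀ i, 0 < w i)
    (k : ℕ) (i : Fin k → Fin N) (hi : Function.Injective i) :
    μ {ω | (∀ s t : Fin k, s < t →
              Real.log (w (i t)) + G (i t) ω < Real.log (w (i s)) + G (i s) ω) ∧
           (∀ j, j ∉ Set.range i → ∀ t : Fin k,
              Real.log (w j) + G j ω < Real.log (w (i t)) + G (i t) ω)} =
    ENNReal.ofReal (∏ t : Fin k,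
      w (i t) / ((∑ j, w j) - ∑ s ∈ Finset.univ.filter (fun s => s < t), w (i s))) := by
  set Y : Fin N → Ω → ℝ := fun j ω => Real.exp (-(Real.log (w j) + G j ω))
  have hY : ∀ j, Measurable (Y j) := fun j => by fun_prop
  have hlaw : μ.map (fun ω j => Y j ω) = Measure.pi fun j => expMeasure (w j) := by
    have hYindep : iIndepFun Y μ :=
      hindep.comp (fun j x => Real.exp (-(Real.log (w j) + x))) fun j => by fun_prop
    rw [hYindep.map_fun_eq_pi_map fun j => (hY j).aemeasurable]
    simp_rw [Y, map_exp_neg_log_add_eq_expMeasure μ (hGmeas _) (hgumbel _) (hw _)]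
  trans μ ((fun ω j => Y j ω) ⁻¹' firstArrivalsAfter 0 i)
  · congr 1
    ext ω
    simp only [firstArrivalsAfter, StrictMono, Y, mem_preimage, mem_ofPred, comp_apply,
      Real.exp_pos, implies_true, true_and, Real.exp_lt_exp, neg_lt_neg_iff]
  · rw [← Measure.map_apply (by fun_prop) (measurableSet_firstArrivalsAfter 0 i), hlaw,
      pi_expMeasure_firstArrivalsAfter w hw i hi le_rfl, mul_zero, neg_zero, Real.exp_zero,
      one_mul]
    rfl

/-- Gumbel top-k trick: for i.i.d. standard Gumbels `G i` and positive weights `w i`,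
the probability that the injective tuple `(i 0, …, i (k-1))` lists the top-`k` indices of
`log w_j + G_j` in decreasing order equals the sequential sampling-without-replacement
probability `∏ t, w (i t) / (∑ j, w j − ∑_{s < t} w (i s))`. -/
theorem stmt_5 {Ω : Type*} [MeasurableSpace Ω] (μ : Measure Ω) [IsProbabilityMeasure μ]
    (N : ℕ) (G : Fin N → Ω → ℝ) (hGmeas : ∀ i, Measurable (G i))
    (hindep : iIndepFun G μ)
    (hgumbel : ∀ i t, μ {ω | G i ω ≤ t} = ENNReal.ofReal (Real.exp (-Real.exp (-t))))
    (w : Fin N → ℝ) (hw : ∀ i, 0 < w i)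
    (k : ℕ) (hk : k ≤ N) (i : Fin k → Fin N) (hi : Function.Injective i) :
    μ {ω | (∀ s t : Fin k, s < t →
              Real.log (w (i t)) + G (i t) ω < Real.log (w (i s)) + G (i s) ω) ∧
           (∀ j, j ∉ Set.range i → ∀ t : Fin k,
              Real.log (w j) + G j ω < Real.log (w (i t)) + G (i t) ω)} =
    ENNReal.ofReal (∏ t : Fin k,
      w (i t) / ((∑ j, w j) - ∑ s ∈ Finset.univ.filter (fun s => s < t), w (i s))) :=
  stmt_5_general μ N G hGmeas hindep hgumbel w hw k i hi
end

section
/- Let z_1,...,z_N be i.i.d. from q on a finite set Z with q > 0, and resample k indices without replacement proportionally to w_i = p(z_i)/q(z_i). Then for any fixed k and any z ∈ Z, the expected fraction of resampled points equal to z converges to p(z) as N → ∞. -/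
open scoped Classical
open MeasureTheory ProbabilityTheory Filter

open Finset Topology

/-!
Let `W` be the total weight of the items and `W_g = ∑ i, w i * g i`. If every weight is at most
`C` and `k C < W`, the expected value of `∑ t, g (σ t)` over `k` sequential weighted draws `σ`
without replacement lies between `k (W_g - k C) / (W - k C)` and `k W_g / (W - k C)` for
`0 ≤ g ≤ 1`. The upper bound follows by induction on `k`, conditioning on the first draw; the
lower bound is the upper bound for `1 - g`. With weights `p(z_i) / q(z_i)` and `g` the indicator
of `z`, the strong law of large numbers gives `W / N → 1` and `W_g / N → p(z)` almost surely, so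
both bounds divided by `k` tend to `p(z)`, and dominated convergence (the fraction lies in
`[0, 1]`) passes to expectations.
-/

section SequentialSampling

variable {α : Type*} {k : ℕ}

def consEmbedding (a : α) (τ : Fin k ↪ {x : α // x ≠ a}) : Fin (k + 1) ↪ α where
  toFun := Fin.cons a fun t => (τ t).1
  inj' := by
    intro s t h
    cases s using Fin.cases <;> cases t using Fin.cases
    · rfl
    · exact absurd h.symm (τ _).2
    · exact absurd h (τ _).2
    · exact congrArg Fin.succ (τ.injective (Subtype.ext (by simpa using h)))

@[simp]
theorem consEmbedding_zero (a : α) (τ : Fin k ↪ {x : α // x ≠ a}) : consEmbedding a τ 0 = a := rfl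

@[simp]
theorem consEmbedding_succ (a : α) (τ : Fin k ↪ {x : α // x ≠ a}) (t : Fin k) :
    consEmbedding a τ t.succ = τ t := rfl

variable (α k) in
def embeddingFinSuccEquiv : (Fin (k + 1) ↪ α) ≃ Σ a : α, (Fin k ↪ {x : α // x ≠ a}) where
  toFun σ := ⟨σ 0, ⟨fun t => ⟨σ t.succ, fun h => Fin.succ_ne_zero t (σ.injective h)⟩,
    fun _ _ h => Fin.succ_injective _ (σ.injective (congrArg Subtype.val h))⟩⟩
  invFun x := consEmbedding x.1 x.2
  left_inv σ := by
    ext t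
    cases t using Fin.cases <;> rfl
  right_inv _ := rfl

variable [Fintype α]

theorem sum_embedding_fin_succ {M : Type*} [AddCommMonoid M] (f : (Fin (k + 1) ↪ α) → M) :
    ∑ σ, f σ = ∑ a, ∑ τ : Fin k ↪ {x : α // x ≠ a}, f (consEmbedding a τ) := by
  rw [← (embeddingFinSuccEquiv α k).symm.sum_comp, ← univ_sigma_univ, sum_sigma]
  rfl

theorem sum_subtype_ne {M : Type*} [AddCommGroup M] (f : α → M) (a : α) :
    ∑ x : {x // x ≠ a}, f x = ∑ x, f x - f a := by
  rw [← sum_erase_eq_sub (mem_univ a), ← sum_subtype (univ.erase a) (fun x => by simp) f]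

/-- The probability that drawing without replacement, each time with probability proportional
to `w` among the items not yet drawn, produces the draws `σ 0, σ 1, …` in this order. -/
noncomputable def seqSampleProb (w : α → ℝ) (σ : Fin k ↪ α) : ℝ :=
  ∏ t : Fin k, w (σ t) / ((∑ i, w i) - ∑ s ∈ univ.filter (fun s => s < t), w (σ s))

theorem seqSampleProb_nonneg {w : α → ℝ} (hw : ∀ i, 0 ≤ w i) (σ : Fin k ↪ α) :
    0 ≤ seqSampleProb w σ := by
  refine prod_nonneg fun t _ => div_nonneg (hw _) ?_
  rw [← sum_map _ σ, ← sum_sdiff_eq_sub (subset_univ _)]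
  exact sum_nonneg fun i _ => hw i

theorem seqSampleProb_consEmbedding (w : α → ℝ) (a : α) (τ : Fin k ↪ {x : α // x ≠ a}) :
    seqSampleProb w (consEmbedding a τ) =
      w a / (∑ i, w i) * seqSampleProb (fun x : {x // x ≠ a} => w x) τ := by
  rw [seqSampleProb, Fin.prod_univ_succ, seqSampleProb, sum_subtype_ne]
  congr 1
  · simp
  · refine prod_congr rfl fun t _ => ?_
    simp [sum_filter, Fin.sum_univ_succ, Fin.succ_lt_succ_iff, Fin.succ_pos, sub_sub]

theorem sum_seqSampleProb_le_one {w : α → ℝ} (hw : ∀ i, 0 ≤ w i) :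
    ∑ σ : Fin k ↪ α, seqSampleProb w σ ≤ 1 := by
  induction k generalizing α with
  | zero => simp [seqSampleProb]
  | succ k ih =>
    calc ∑ σ, seqSampleProb w σ
        = ∑ a, w a / (∑ i, w i) *
            ∑ τ : Fin k ↪ {x // x ≠ a}, seqSampleProb (fun x : {x // x ≠ a} => w x) τ := by
          simp only [sum_embedding_fin_succ, seqSampleProb_consEmbedding, mul_sum]
      _ ≤ ∑ a, w a / (∑ i, w i) := by
          refine sum_le_sum fun a _ => mul_le_of_le_one_right ?_ (ih fun x => hw x)
          exact div_nonneg (hw a) (sum_nonneg fun i _ => hw i)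
      _ ≤ 1 := by rw [← sum_div]; exact div_self_le_one _

theorem sum_seqSampleProb_eq_one {w : α → ℝ} {C : ℝ} (hw : ∀ i, 0 ≤ w i) (hwC : ∀ i, w i ≤ C)
    (hC : 0 ≤ C) (hW : k * C < ∑ i, w i) :
    ∑ σ : Fin k ↪ α, seqSampleProb w σ = 1 := by
  induction k generalizing α with
  | zero => simp [seqSampleProb]
  | succ k ih =>
    have hW0 : (∑ i, w i) ≠ 0 := by push_cast at hW; nlinarith
    calc ∑ σ, seqSampleProb w σ
        = ∑ a, w a / (∑ i, w i) *
            ∑ τ : Fin k ↪ {x // x ≠ a}, seqSampleProb (fun x : {x // x ≠ a} => w x) τ := by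
          simp only [sum_embedding_fin_succ, seqSampleProb_consEmbedding, mul_sum]
      _ = ∑ a, w a / (∑ i, w i) := by
          refine sum_congr rfl fun a _ => ?_
          have hrest : k * C < ∑ x : {x // x ≠ a}, w x := by
            rw [sum_subtype_ne]; push_cast at hW; linarith [hwC a]
          rw [ih (w := fun x : {x // x ≠ a} => w x) (fun x => hw x) (fun x => hwC x) hrest,
            mul_one]
      _ = 1 := by rw [← sum_div, div_self hW0]

/-- The expected value of `∑ t, g (σ t)` when `σ` is drawn by `k` steps of sequential weighted
sampling without replacement. -/
noncomputable def seqSampleSum (w g : α → ℝ) (k : ℕ) : ℝ :=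
  ∑ σ : Fin k ↪ α, seqSampleProb w σ * ∑ t, g (σ t)

theorem sum_seqSampleProb_mul_card_filter_div (w : α → ℝ) (b : α → Prop) (k : ℕ) :
    ∑ σ : Fin k ↪ α, seqSampleProb w σ * (((univ.filter fun t => b (σ t)).card : ℝ) / k) =
      seqSampleSum w (fun i => if b i then 1 else 0) k / k := by
  simp only [seqSampleSum, sum_div, mul_div_assoc, natCast_card_filter]

theorem seqSampleSum_succ (w g : α → ℝ) (k : ℕ) :
    seqSampleSum w g (k + 1) = ∑ a, w a / (∑ i, w i) *
      (g a * ∑ τ : Fin k ↪ {x // x ≠ a}, seqSampleProb (fun x : {x // x ≠ a} => w x) τ +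
        seqSampleSum (fun x : {x // x ≠ a} => w x) (fun x => g x) k) := by
  rw [seqSampleSum, sum_embedding_fin_succ]
  refine sum_congr rfl fun a _ => ?_
  rw [seqSampleSum, mul_sum, ← sum_add_distrib, mul_sum]
  refine sum_congr rfl fun τ _ => ?_
  rw [seqSampleProb_consEmbedding, Fin.sum_univ_succ]
  simp only [consEmbedding_zero, consEmbedding_succ]
  ring

theorem seqSampleSum_add_seqSampleSum_one_sub (w g : α → ℝ) (k : ℕ) :
    seqSampleSum w g k + seqSampleSum w (fun i => 1 - g i) k =
      k * ∑ σ : Fin k ↪ α, seqSampleProb w σ := by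
  simp only [seqSampleSum, ← sum_add_distrib, ← mul_add, mul_sum]
  refine sum_congr rfl fun σ _ => ?_
  simp

theorem seqSampleSum_nonneg {w g : α → ℝ} (hw : ∀ i, 0 ≤ w i) (hg : ∀ i, 0 ≤ g i) :
    0 ≤ seqSampleSum w g k :=
  sum_nonneg fun σ _ => mul_nonneg (seqSampleProb_nonneg hw σ) (sum_nonneg fun _ _ => hg _)

theorem seqSampleSum_le_of_le_one {w g : α → ℝ} (hw : ∀ i, 0 ≤ w i) (hg : ∀ i, g i ≤ 1) :
    seqSampleSum w g k ≤ k := by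
  have hsum := seqSampleSum_add_seqSampleSum_one_sub w g k
  have hcompl := seqSampleSum_nonneg (k := k) (g := fun i => 1 - g i) hw
    fun i => sub_nonneg.2 (hg i)
  nlinarith [sum_seqSampleProb_le_one (k := k) hw]

theorem seqSampleSum_le {w g : α → ℝ} {C : ℝ} (hw : ∀ i, 0 ≤ w i) (hwC : ∀ i, w i ≤ C)
    (hC : 0 ≤ C) (hg : ∀ i, 0 ≤ g i) (hW : k * C < ∑ i, w i) :
    seqSampleSum w g k ≤ k * (∑ i, w i * g i) / ((∑ i, w i) - k * C) := by
  induction k generalizing α with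
  | zero => simp [seqSampleSum]
  | succ k ih =>
    push_cast at hW ⊢
    set W := ∑ i, w i
    set S := ∑ i, w i * g i
    set D := W - (k + 1) * C
    have hS : 0 ≤ S := sum_nonneg fun i _ => mul_nonneg (hw i) (hg i)
    have hD : 0 < D := by linarith
    have hDW : D ≤ W := sub_le_self _ (by positivity)
    have hterm : ∀ a, g a * ∑ τ : Fin k ↪ {x // x ≠ a},
          seqSampleProb (fun x : {x // x ≠ a} => w x) τ +
        seqSampleSum (fun x : {x // x ≠ a} => w x) (fun x => g x) k ≤ g a + k * S / D := by
      intro a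
      have hW' : D ≤ ∑ x : {x // x ≠ a}, w x - k * C := by rw [sum_subtype_ne]; linarith [hwC a]
      have hS' : ∑ x : {x // x ≠ a}, w x * g x ≤ S := by
        rw [sum_subtype_ne (fun x => w x * g x)]; linarith [mul_nonneg (hw a) (hg a)]
      gcongr
      · exact mul_le_of_le_one_right (hg a) (sum_seqSampleProb_le_one fun x => hw x)
      · calc _ ≤ k * (∑ x : {x // x ≠ a}, w x * g x) / (∑ x : {x // x ≠ a}, w x - k * C) :=
              ih (fun x => hw x) (fun x => hwC x) (fun x => hg x) (by linarith)
          _ ≤ k * S / D := by gcongr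
    rw [seqSampleSum_succ]
    calc _ ≤ ∑ a, w a / W * (g a + k * S / D) :=
          sum_le_sum fun a _ => mul_le_mul_of_nonneg_left (hterm a)
            (div_nonneg (hw a) (sum_nonneg fun i _ => hw i))
      _ = S / W + W / W * (k * S / D) := by
          simp only [mul_add, sum_add_distrib, ← sum_mul, ← sum_div, div_mul_eq_mul_div]
          rfl
      _ ≤ S / D + k * S / D := by
          gcongr
          exact mul_le_of_le_one_left (by positivity) (div_self_le_one W)
      _ = (k + 1) * S / D := by ring

theorem le_seqSampleSum {w g : α → ℝ} {C : ℝ} (hw : ∀ i, 0 ≤ w i) (hwC : ∀ i, w i ≤ C)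
    (hC : 0 ≤ C) (hg : ∀ i, g i ≤ 1) (hW : k * C < ∑ i, w i) :
    k * ((∑ i, w i * g i) - k * C) / ((∑ i, w i) - k * C) ≤ seqSampleSum w g k := by
  -- since `k C < W`, all `k` draws happen, so the expected sums of `g` and `1 - g` add up to `k`
  have hcompl :=
    seqSampleSum_le (g := fun i => 1 - g i) hw hwC hC (fun i => sub_nonneg.2 (hg i)) hW
  have hsum := seqSampleSum_add_seqSampleSum_one_sub w g k
  rw [sum_seqSampleProb_eq_one hw hwC hC hW, mul_one] at hsum
  have hS : ∑ i, w i * (1 - g i) = (∑ i, w i) - ∑ i, w i * g i := by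
    simp only [mul_sub, mul_one, sum_sub_distrib]
  rw [hS] at hcompl
  have hD : (∑ i, w i) - k * C ≠ 0 := by linarith
  calc k * ((∑ i, w i * g i) - k * C) / ((∑ i, w i) - k * C)
      = k - k * ((∑ i, w i) - ∑ i, w i * g i) / ((∑ i, w i) - k * C) := by
        field_simp
        ring
    _ ≤ seqSampleSum w g k := by linarith

end SequentialSampling

theorem tendsto_sub_div_sub {u v : ℕ → ℝ} {x y : ℝ} (a b : ℝ) (hy : y ≠ 0)
    (hu : Tendsto (fun N : ℕ => u N / N) atTop (𝓝 x))
    (hv : Tendsto (fun N : ℕ => v N / N) atTop (𝓝 y)) :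
    Tendsto (fun N => (u N - a) / (v N - b)) atTop (𝓝 (x / y)) := by
  have hu' : Tendsto (fun N : ℕ => u N / N - a / N) atTop (𝓝 x) := by
    simpa using hu.sub (tendsto_const_div_atTop_nhds_zero_nat a)
  have hv' : Tendsto (fun N : ℕ => v N / N - b / N) atTop (𝓝 y) := by
    simpa using hv.sub (tendsto_const_div_atTop_nhds_zero_nat b)
  refine (hu'.div hv' hy).congr' ?_
  filter_upwards [eventually_ne_atTop 0] with N hN
  rw [Pi.div_apply, ← sub_div, ← sub_div, div_div_div_cancel_right₀ (Nat.cast_ne_zero.2 hN)]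

theorem tendsto_seqSampleSum_div {v g : ℕ → ℝ} {C m ρ : ℝ} {k : ℕ} (hk : 0 < k)
    (hv : ∀ i, 0 ≤ v i) (hvC : ∀ i, v i ≤ C) (hC : 0 ≤ C) (hg₀ : ∀ i, 0 ≤ g i)
    (hg₁ : ∀ i, g i ≤ 1) (hm : 0 < m)
    (hvm : Tendsto (fun N : ℕ => (∑ i ∈ range N, v i) / N) atTop (𝓝 m))
    (hvg : Tendsto (fun N : ℕ => (∑ i ∈ range N, v i * g i) / N) atTop (𝓝 ρ)) :
    Tendsto (fun N => seqSampleSum (fun i : Fin N => v i) (fun i : Fin N => g i) k / k) atTop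
      (𝓝 (ρ / m)) := by
  simp only [← Fin.sum_univ_eq_sum_range] at hvm hvg
  have hk' : (0 : ℝ) < k := Nat.cast_pos.2 hk
  have hpos : ∀ᶠ N : ℕ in atTop, k * C < ∑ i : Fin N, v i := by
    refine ((hvm.pos_mul_atTop hm tendsto_natCast_atTop_atTop).congr' ?_).eventually_gt_atTop _
    filter_upwards [eventually_ne_atTop 0] with N hN
    exact div_mul_cancel₀ _ (Nat.cast_ne_zero.2 hN)
  refine tendsto_of_tendsto_of_tendsto_of_le_of_le'
    (tendsto_sub_div_sub (k * C) (k * C) hm.ne' hvg hvm)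
    (tendsto_sub_div_sub 0 (k * C) hm.ne' hvg hvm) ?_ ?_
  · filter_upwards [hpos] with N hN
    rw [le_div_iff₀ hk']
    calc _ = k * ((∑ i : Fin N, v i * g i) - k * C) / ((∑ i : Fin N, v i) - k * C) := by ring
      _ ≤ _ := le_seqSampleSum (fun i => hv i) (fun i => hvC i) hC (fun i => hg₁ i) hN
  · filter_upwards [hpos] with N hN
    rw [div_le_iff₀ hk']
    calc _ ≤ k * (∑ i : Fin N, v i * g i) / ((∑ i : Fin N, v i) - k * C) :=
          seqSampleSum_le (fun i => hv i) (fun i => hvC i) hC (fun i => hg₀ i) hN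
      _ = _ := by ring

theorem ae_tendsto_average_comp {Z Ω : Type*} [Fintype Z] [MeasurableSpace Z]
    [MeasurableSingletonClass Z] [MeasurableSpace Ω] {μ : Measure Ω} [IsFiniteMeasure μ]
    {X : ℕ → Ω → Z} {q : Z → ℝ} (hq : ∀ z, 0 ≤ q z) (hX : ∀ n, Measurable (X n))
    (hindep : Pairwise fun i j => IndepFun (X i) (X j) μ)
    (hlaw : ∀ n z, μ {ω | X n ω = z} = ENNReal.ofReal (q z)) (g : Z → ℝ) :
    ∀ᵐ ω ∂μ, Tendsto (fun n : ℕ => (∑ i ∈ range n, g (X i ω)) / n) atTop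
      (𝓝 (∑ z, q z * g z)) := by
  have hg : Measurable g := measurable_of_countable g
  have hident : ∀ i, IdentDistrib (X i) (X 0) μ μ := fun i =>
    ⟨(hX i).aemeasurable, (hX 0).aemeasurable, Measure.ext_of_singleton fun z => by
      rw [Measure.map_apply (hX i) (measurableSet_singleton z),
        Measure.map_apply (hX 0) (measurableSet_singleton z)]
      exact (hlaw i z).trans (hlaw 0 z).symm⟩
  have hmean : μ[fun ω => g (X 0 ω)] = ∑ z, q z * g z := by
    rw [← integral_map (hX 0).aemeasurable hg.aestronglyMeasurable, integral_fintype .of_finite]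
    refine sum_congr rfl fun z _ => ?_
    rw [measureReal_def, Measure.map_apply (hX 0) (measurableSet_singleton z), smul_eq_mul]
    simp only [Set.preimage, Set.mem_singleton_iff, hlaw 0 z, ENNReal.toReal_ofReal (hq z)]
  rw [← hmean]
  exact strong_law_ae_real (fun n ω => g (X n ω)) (Integrable.of_finite.comp_measurable (hX 0))
    (fun i j hij => (hindep hij).comp hg hg) (fun i => (hident i).comp hg)

theorem tendsto_integral_seqSampleSum_comp {Z Ω : Type*} [Fintype Z] [MeasurableSpace Z]
    [MeasurableSingletonClass Z] [MeasurableSpace Ω] {μ : Measure Ω} [IsProbabilityMeasure μ]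
    {X : ℕ → Ω → Z} {q w g : Z → ℝ} {k : ℕ} (hk : 0 < k) (hq : ∀ z, 0 ≤ q z)
    (hX : ∀ n, Measurable (X n)) (hindep : Pairwise fun i j => IndepFun (X i) (X j) μ)
    (hlaw : ∀ n z, μ {ω | X n ω = z} = ENNReal.ofReal (q z)) (hw : ∀ z, 0 ≤ w z)
    (hg₀ : ∀ z, 0 ≤ g z) (hg₁ : ∀ z, g z ≤ 1) (hm : 0 < ∑ z, q z * w z) :
    Tendsto (fun N => ∫ ω, seqSampleSum (fun i : Fin N => w (X i ω)) (fun i => g (X i ω)) k / k ∂μ)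
      atTop (𝓝 ((∑ z, q z * (w z * g z)) / ∑ z, q z * w z)) := by
  set F : ℕ → Ω → ℝ := fun N ω =>
    seqSampleSum (fun i : Fin N => w (X i ω)) (fun i => g (X i ω)) k / k
  have hk' : (0 : ℝ) < k := Nat.cast_pos.2 hk
  have hmeas : ∀ N, AEStronglyMeasurable (F N) μ := fun N =>
    ((measurable_of_countable fun x : Fin N → Z =>
      seqSampleSum (fun i => w (x i)) (fun i => g (x i)) k / k).comp
        (measurable_pi_lambda _ fun i => hX i)).aestronglyMeasurable
  have hbound : ∀ N ω, ‖F N ω‖ ≤ 1 := fun N ω => by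
    have hF₀ := seqSampleSum_nonneg (k := k) (fun i : Fin N => hw (X i ω)) fun i => hg₀ (X i ω)
    rw [Real.norm_of_nonneg (div_nonneg hF₀ hk'.le), div_le_one hk']
    exact seqSampleSum_le_of_le_one (fun _ => hw _) fun _ => hg₁ _
  have hlim : ∀ᵐ ω ∂μ, Tendsto (F · ω) atTop (𝓝 ((∑ z, q z * (w z * g z)) / ∑ z, q z * w z)) := by
    filter_upwards [ae_tendsto_average_comp hq hX hindep hlaw w,
      ae_tendsto_average_comp hq hX hindep hlaw fun z => w z * g z] with ω hW hS
    exact tendsto_seqSampleSum_div (v := fun i => w (X i ω)) (g := fun i => g (X i ω)) hk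
      (fun _ => hw _) (fun i => single_le_sum (fun z _ => hw z) (mem_univ (X i ω)))
      (sum_nonneg fun z _ => hw z) (fun _ => hg₀ _) (fun _ => hg₁ _) hm hW hS
  simpa using tendsto_integral_of_dominated_convergence (fun _ => 1) hmeas (integrable_const 1)
    (fun N => ae_of_all _ (hbound N)) hlim

theorem stmt_17_general {Z : Type*} [Fintype Z] [MeasurableSpace Z] [MeasurableSingletonClass Z]
    (p q : Z → ℝ) (hq : ∀ z, 0 < q z)
    (hp : ∀ z, 0 ≤ p z) (hpsum : ∑ z, p z = 1)
    {Ω : Type*} [MeasurableSpace Ω] (μ : Measure Ω) [IsProbabilityMeasure μ]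
    (X : ℕ → Ω → Z) (hXmeas : ∀ n, Measurable (X n))
    (hindep : iIndepFun X μ)
    (hlaw : ∀ n z, μ {ω | X n ω = z} = ENNReal.ofReal (q z))
    (k : ℕ) (hk : 0 < k) :
    ∀ z : Z, Tendsto
      (fun N => ∫ ω,
        ∑ σ : Fin k ↪ Fin N,
          (∏ t : Fin k,
            (p (X (σ t) ω) / q (X (σ t) ω)) /
              ((∑ i : Fin N, p (X i ω) / q (X i ω)) -
                ∑ s ∈ Finset.univ.filter (fun s => s < t), p (X (σ s) ω) / q (X (σ s) ω))) *
          (((Finset.univ.filter (fun t : Fin k => X (σ t) ω = z)).card : ℝ) / k) ∂μ)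
      atTop (nhds (p z)) := by
  intro z
  have hqw : ∀ x, q x * (p x / q x) = p x := fun x => mul_div_cancel₀ _ (hq x).ne'
  have hlim := tendsto_integral_seqSampleSum_comp (w := fun x => p x / q x)
    (g := fun x => if x = z then 1 else 0) hk (fun x => (hq x).le) hXmeas
    (fun i j hij => hindep.indepFun hij) hlaw (fun x => div_nonneg (hp x) (hq x).le)
    (fun x => by positivity) (fun x => by split_ifs <;> norm_num) (by simp [hqw, hpsum])
  simp only [hqw, hpsum, mul_ite, mul_one, mul_zero, sum_ite_eq', mem_univ, if_true, div_one]
    at hlim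
  exact hlim.congr fun N => integral_congr_ae <| ae_of_all _ fun ω =>
    (sum_seqSampleProb_mul_card_filter_div (fun i : Fin N => p (X i ω) / q (X i ω))
      (fun i => X i ω = z) k).symm

/-- k-sample importance resampling: resampling `k` indices without replacement with weights
`w_i = p(z_i)/q(z_i)` from `N` i.i.d. `q`-samples, the expected fraction of resampled points
equal to any `z` converges to `p z` as `N → ∞`. The expectation sums over ordered
sequential-sampling-without-replacement draws (injections `Fin k ↪ Fin N`). -/
theorem stmt_17 {Z : Type*} [Fintype Z] [MeasurableSpace Z] [MeasurableSingletonClass Z]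
    (p q : Z → ℝ) (hq : ∀ z, 0 < q z) (hqsum : ∑ z, q z = 1)
    (hp : ∀ z, 0 ≤ p z) (hpsum : ∑ z, p z = 1)
    {Ω : Type*} [MeasurableSpace Ω] (μ : Measure Ω) [IsProbabilityMeasure μ]
    (X : ℕ → Ω → Z) (hXmeas : ∀ n, Measurable (X n))
    (hindep : iIndepFun X μ)
    (hlaw : ∀ n z, μ {ω | X n ω = z} = ENNReal.ofReal (q z))
    (k : ℕ) (hk : 0 < k) :
    ∀ z : Z, Tendsto
      (fun N => ∫ ω,
        ∑ σ : Fin k ↪ Fin N,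
          (∏ t : Fin k,
            (p (X (σ t) ω) / q (X (σ t) ω)) /
              ((∑ i : Fin N, p (X i ω) / q (X i ω)) -
                ∑ s ∈ Finset.univ.filter (fun s => s < t), p (X (σ s) ω) / q (X (σ s) ω))) *
          (((Finset.univ.filter (fun t : Fin k => X (σ t) ω = z)).card : ℝ) / k) ∂μ)
      atTop (nhds (p z)) :=
  stmt_17_general p q hq hp hpsum μ X hXmeas hindep hlaw k hk
end

section
/- If G is standard Gumbel, then for any w > 0, P(log w + G ≤ t) = exp(−w e^{−t}); consequently, for independent standard Gumbels, P(log w_i + G_i = max_j (log w_j + G_j)) = w_i/∑_j w_j and the max is independent of the argmax. -/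
/-!
Write `F_a(t) = exp (-a e^{-t})` and `f_a = F_a'`. Shifting a standard Gumbel variable by `log a`
gives distribution function `F_a`, and `F_a F_c = F_{a+c}`, so the maximum of the independent
variables `X_j = log w_j + G_j` has distribution function `F_S` with `S = ∑ w_j`. Splitting off coordinate `i` (Fubini),
`P(X_i is the strict maximum, X_i ≤ b) = ∫_{-∞}^b f_{w_i} F_{S - w_i} = (w_i / S) F_S(b)`,
because `f_a F_c = a / (a + c) · f_{a+c}`. Letting `b → ∞` gives `w_i / S`, and the joint
probability is then the product of the two marginals.
-/

open MeasureTheory ProbabilityTheory Set Filter Topology Real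

theorem integrableOn_Iic_deriv_of_nonneg' {g g' : ℝ → ℝ} {b l : ℝ}
    (hderiv : ∀ x ∈ Iic b, HasDerivAt g (g' x) x) (hpos : ∀ x ∈ Iio b, 0 ≤ g' x)
    (hg : Tendsto g atBot (𝓝 l)) : IntegrableOn g' (Iic b) := by
  have hreflected : IntegrableOn (fun x => g' (-x)) (Ioi (-b)) := by
    refine integrableOn_Ioi_deriv_of_nonneg' (g := fun x => -g (-x)) (l := -l)
      (fun x hx => ?_) (fun x hx => hpos (-x) (by simpa [neg_lt] using hx))
      (hg.comp tendsto_neg_atTop_atBot).neg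
    exact (((hderiv (-x) (by simpa [neg_le] using hx)).comp x (hasDerivAt_neg' x)).neg).congr_deriv
      (by ring)
  rw [integrableOn_Iic_iff_integrableOn_Iio]
  rw [← (Measure.measurePreserving_neg volume).integrableOn_comp_preimage
    (Homeomorph.neg ℝ).measurableEmbedding] at hreflected
  simpa [Function.comp_def] using hreflected

theorem setLIntegral_Iic_deriv_of_nonneg {g g' : ℝ → ℝ} {b l : ℝ}
    (hderiv : ∀ x ∈ Iic b, HasDerivAt g (g' x) x) (hpos : ∀ x ∈ Iic b, 0 ≤ g' x)
    (hg : Tendsto g atBot (𝓝 l)) :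
    ∫⁻ x in Iic b, ENNReal.ofReal (g' x) = ENNReal.ofReal (g b - l) := by
  have hint := integrableOn_Iic_deriv_of_nonneg' hderiv (fun x hx => hpos x (mem_Iic_of_Iio hx)) hg
  rw [← ofReal_integral_eq_lintegral_ofReal hint (ae_restrict_of_forall_mem measurableSet_Iic hpos),
    integral_Iic_of_hasDerivAt_of_tendsto' hderiv hint hg]

theorem measurableSet_setOf_forall_ne_lt {ι : Type*} [Countable ι] (i : ι) :
    MeasurableSet {x : ι → ℝ | ∀ j, j ≠ i → x j < x i} := by
  simp only [ofPred_forall]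
  exact .iInter fun j => .iInter fun _ => measurableSet_lt (measurable_pi_apply j)
    (measurable_pi_apply i)

theorem measurableSet_setOf_forall_le {ι : Type*} [Countable ι] (t : ℝ) :
    MeasurableSet {x : ι → ℝ | ∀ j, x j ≤ t} := by
  simp only [ofPred_forall]
  exact .iInter fun j => measurableSet_le (measurable_pi_apply j) measurable_const

theorem setOf_forall_ne_lt_inter_forall_le {ι α : Type*} [Preorder α] (i : ι) (t : α) :
    {x : ι → α | ∀ j, j ≠ i → x j < x i} ∩ {x | ∀ j, x j ≤ t} =
      {x | ∀ j, j ≠ i → x j < x i} ∩ {x | x i ≤ t} := by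
  ext x
  simp only [mem_inter_iff, mem_ofPred_eq]
  refine ⟨fun ⟨hmax, hle⟩ => ⟨hmax, hle i⟩, fun ⟨hmax, hle⟩ => ⟨hmax, fun j => ?_⟩⟩
  rcases eq_or_ne j i with rfl | hj
  · exact hle
  · exact (hmax j hj).le.trans hle

theorem pi_forall_ne_lt_inter_le {n : ℕ} (ν : Fin (n + 1) → Measure ℝ) [∀ j, SigmaFinite (ν j)]
    (i : Fin (n + 1)) (b : ℝ) :
    Measure.pi ν ({x | ∀ j, j ≠ i → x j < x i} ∩ {x | x i ≤ b}) =
      ∫⁻ y in Iic b, ∏ k, ν (i.succAbove k) (Iio y) ∂ν i := by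
  set T : Set (ℝ × (Fin n → ℝ)) := {p | p.1 ≤ b ∧ ∀ k, p.2 k < p.1}
  have hT : MeasurableSet T := by
    have hlt : MeasurableSet {p : ℝ × (Fin n → ℝ) | ∀ k, p.2 k < p.1} := by
      simp only [ofPred_forall]
      exact MeasurableSet.iInter fun k => measurableSet_lt (by fun_prop) (by fun_prop)
    exact (measurableSet_le measurable_fst measurable_const).inter hlt
  have hpre : MeasurableEquiv.piFinSuccAbove (fun _ => ℝ) i ⁻¹' T =
      {x | ∀ j, j ≠ i → x j < x i} ∩ {x | x i ≤ b} := by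
    ext x
    simp [T, Fin.forall_iff_succAbove i, Fin.removeNth, and_comm]
  rw [← hpre, (measurePreserving_piFinSuccAbove ν i).measure_preimage hT.nullMeasurableSet,
    Measure.prod_apply hT, ← lintegral_indicator measurableSet_Iic]
  refine lintegral_congr fun y => ?_
  by_cases hy : y ≤ b
  · have hslice : Prod.mk y ⁻¹' T = univ.pi fun _ => Iio y := by ext z; simp [T, hy]
    rw [indicator_of_mem (show y ∈ Iic b from hy), hslice, Measure.pi_pi]
  · have hslice : Prod.mk y ⁻¹' T = ∅ := by ext z; simp [T, hy]
    rw [indicator_of_notMem (show y ∉ Iic b from hy), hslice, measure_empty]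

/-- The distribution function of `log a + G` for a standard Gumbel variable `G`; for `a > 0`,
`gumbelLaw a` below is the law of `log a + G`. -/
noncomputable def gumbelCDF (a x : ℝ) : ℝ := exp (-(a * exp (-x)))

noncomputable def gumbelPDF (a x : ℝ) : ℝ := a * exp (-x) * gumbelCDF a x

noncomputable def gumbelLaw (a : ℝ) : Measure ℝ :=
  volume.withDensity fun x => ENNReal.ofReal (gumbelPDF a x)

theorem gumbelCDF_pos (a x : ℝ) : 0 < gumbelCDF a x := exp_pos _

theorem gumbelCDF_one (x : ℝ) : gumbelCDF 1 x = exp (-exp (-x)) := by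
  rw [gumbelCDF, one_mul]

theorem gumbelCDF_add (a b x : ℝ) : gumbelCDF (a + b) x = gumbelCDF a x * gumbelCDF b x := by
  simp only [gumbelCDF, ← exp_add]; ring_nf

theorem gumbelCDF_sum {ι : Type*} (s : Finset ι) (a : ι → ℝ) (x : ℝ) :
    gumbelCDF (∑ j ∈ s, a j) x = ∏ j ∈ s, gumbelCDF (a j) x := by
  simp only [gumbelCDF, ← exp_sum, Finset.sum_mul, Finset.sum_neg_distrib]

theorem gumbelCDF_one_sub_log {a : ℝ} (ha : 0 < a) (x : ℝ) :
    gumbelCDF 1 (x - log a) = gumbelCDF a x := by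
  simp only [gumbelCDF, neg_sub, exp_sub, exp_neg, exp_log ha]; ring_nf

theorem gumbelPDF_mul_gumbelCDF {a b : ℝ} (hab : a + b ≠ 0) (x : ℝ) :
    gumbelPDF a x * gumbelCDF b x = a / (a + b) * gumbelPDF (a + b) x := by
  simp only [gumbelPDF, mul_assoc, ← gumbelCDF_add]
  field_simp

theorem continuous_gumbelCDF (a : ℝ) : Continuous (gumbelCDF a) := by
  unfold gumbelCDF; fun_prop

theorem continuous_gumbelPDF (a : ℝ) : Continuous (gumbelPDF a) := by
  have := continuous_gumbelCDF a
  unfold gumbelPDF; fun_prop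

theorem hasDerivAt_gumbelCDF (a x : ℝ) : HasDerivAt (gumbelCDF a) (gumbelPDF a x) x := by
  have := ((((hasDerivAt_neg' x).exp).const_mul a).neg).exp
  exact this.congr_deriv (by simp only [gumbelPDF, gumbelCDF, Pi.neg_apply]; ring)

theorem gumbelPDF_nonneg {a : ℝ} (ha : 0 ≤ a) (x : ℝ) : 0 ≤ gumbelPDF a x := by
  unfold gumbelPDF gumbelCDF; positivity

theorem tendsto_gumbelCDF_atBot {a : ℝ} (ha : 0 < a) : Tendsto (gumbelCDF a) atBot (𝓝 0) :=
  tendsto_exp_atBot.comp <| tendsto_neg_atTop_atBot.comp <|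
    (tendsto_exp_atTop.comp tendsto_neg_atBot_atTop).const_mul_atTop ha

theorem tendsto_gumbelCDF_atTop (a : ℝ) : Tendsto (gumbelCDF a) atTop (𝓝 1) := by
  have h : Tendsto (fun x => -(a * exp (-x))) atTop (𝓝 0) := by
    simpa using ((tendsto_exp_atBot.comp tendsto_neg_atTop_atBot).const_mul a).neg
  rw [← exp_zero]
  exact (continuous_exp.tendsto 0).comp h

theorem setLIntegral_gumbelPDF_Iic {a : ℝ} (ha : 0 < a) (b : ℝ) :
    ∫⁻ x in Iic b, ENNReal.ofReal (gumbelPDF a x) = ENNReal.ofReal (gumbelCDF a b) := by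
  rw [setLIntegral_Iic_deriv_of_nonneg (fun x _ => hasDerivAt_gumbelCDF a x)
    (fun x _ => gumbelPDF_nonneg ha.le x) (tendsto_gumbelCDF_atBot ha), sub_zero]

theorem gumbelLaw_Iic {a : ℝ} (ha : 0 < a) (t : ℝ) :
    gumbelLaw a (Iic t) = ENNReal.ofReal (gumbelCDF a t) := by
  rw [gumbelLaw, withDensity_apply _ measurableSet_Iic, setLIntegral_gumbelPDF_Iic ha]

theorem gumbelLaw_Iio {a : ℝ} (ha : 0 < a) (t : ℝ) :
    gumbelLaw a (Iio t) = ENNReal.ofReal (gumbelCDF a t) := by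
  rw [← gumbelLaw_Iic ha]
  exact measure_congr ((withDensity_absolutelyContinuous _ _).ae_le Iio_ae_eq_Iic)

theorem isProbabilityMeasure_gumbelLaw {a : ℝ} (ha : 0 < a) :
    IsProbabilityMeasure (gumbelLaw a) := by
  constructor
  have h := tendsto_measure_iUnion_atTop (μ := gumbelLaw a) (monotone_Iic (α := ℝ))
  rw [iUnion_Iic] at h
  refine tendsto_nhds_unique h ?_
  simp only [Function.comp_def, gumbelLaw_Iic ha]
  simpa using ENNReal.tendsto_ofReal (tendsto_gumbelCDF_atTop a)

theorem setLIntegral_gumbelCDF_gumbelLaw {a c : ℝ} (ha : 0 < a) (hc : 0 ≤ c) (b : ℝ) :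
    ∫⁻ y in Iic b, ENNReal.ofReal (gumbelCDF c y) ∂gumbelLaw a =
      ENNReal.ofReal (a / (a + c) * gumbelCDF (a + c) b) := by
  have hac : 0 < a + c := by positivity
  rw [gumbelLaw, setLIntegral_withDensity_eq_setLIntegral_mul _
    (continuous_gumbelPDF a).measurable.ennreal_ofReal
    (continuous_gumbelCDF c).measurable.ennreal_ofReal measurableSet_Iic]
  simp_rw [Pi.mul_apply, ← ENNReal.ofReal_mul (gumbelPDF_nonneg ha.le _),
    gumbelPDF_mul_gumbelCDF hac.ne', ENNReal.ofReal_mul (div_pos ha hac).le]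
  rw [lintegral_const_mul _ (continuous_gumbelPDF _).measurable.ennreal_ofReal,
    setLIntegral_gumbelPDF_Iic hac, ← ENNReal.ofReal_mul (div_pos ha hac).le]

theorem pi_gumbelLaw_forall_le {N : ℕ} {w : Fin N → ℝ} (hw : ∀ j, 0 < w j) (t : ℝ) :
    Measure.pi (fun j => gumbelLaw (w j)) {x | ∀ j, x j ≤ t} =
      ENNReal.ofReal (gumbelCDF (∑ j, w j) t) := by
  have := fun j => isProbabilityMeasure_gumbelLaw (hw j)
  rw [show {x : Fin N → ℝ | ∀ j, x j ≤ t} = univ.pi fun _ => Iic t by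
    ext; simp only [mem_univ_pi, mem_Iic, mem_ofPred_eq], Measure.pi_pi]
  simp only [gumbelLaw_Iic, hw]
  rw [← ENNReal.ofReal_prod_of_nonneg (fun j _ => (gumbelCDF_pos _ _).le), gumbelCDF_sum]

theorem pi_gumbelLaw_argmax_inter_le {N : ℕ} {w : Fin N → ℝ} (hw : ∀ j, 0 < w j) (i : Fin N)
    (b : ℝ) :
    Measure.pi (fun j => gumbelLaw (w j)) ({x | ∀ j, j ≠ i → x j < x i} ∩ {x | x i ≤ b}) =
      ENNReal.ofReal (w i / (∑ j, w j) * gumbelCDF (∑ j, w j) b) := by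
  obtain ⟨n, rfl⟩ : ∃ n, N = n + 1 := Nat.exists_eq_add_one_of_ne_zero i.pos.ne'
  have := fun j => isProbabilityMeasure_gumbelLaw (hw j)
  have hrest : ∑ k, w (i.succAbove k) = ∑ j, w j - w i := by
    rw [Fin.sum_univ_succAbove w i]; ring
  rw [pi_forall_ne_lt_inter_le]
  simp only [gumbelLaw_Iio, hw]
  simp_rw [← ENNReal.ofReal_prod_of_nonneg (fun k _ => (gumbelCDF_pos _ _).le), ← gumbelCDF_sum,
    hrest]
  rw [setLIntegral_gumbelCDF_gumbelLaw (hw i) (hrest ▸ Finset.sum_nonneg fun k _ => (hw _).le),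
    add_sub_cancel]

theorem pi_gumbelLaw_argmax {N : ℕ} {w : Fin N → ℝ} (hw : ∀ j, 0 < w j) (i : Fin N) :
    Measure.pi (fun j => gumbelLaw (w j)) {x | ∀ j, j ≠ i → x j < x i} =
      ENNReal.ofReal (w i / ∑ j, w j) := by
  set A := {x : Fin N → ℝ | ∀ j, j ≠ i → x j < x i}
  have hmono : Monotone fun b : ℝ => A ∩ {x | x i ≤ b} :=
    fun b b' hb => inter_subset_inter_right _ fun x hx => le_trans hx hb
  have hunion : ⋃ b : ℝ, A ∩ {x | x i ≤ b} = A := by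
    ext x
    simp only [mem_iUnion, mem_inter_iff, mem_ofPred_eq]
    exact ⟨fun ⟨_, hx, _⟩ => hx, fun hx => ⟨x i, hx, le_rfl⟩⟩
  have h := tendsto_measure_iUnion_atTop (μ := Measure.pi fun j => gumbelLaw (w j)) hmono
  rw [hunion] at h
  refine tendsto_nhds_unique h ?_
  simp only [Function.comp_def, A, pi_gumbelLaw_argmax_inter_le hw i]
  simpa using ENNReal.tendsto_ofReal ((tendsto_gumbelCDF_atTop _).const_mul (w i / ∑ j, w j))

theorem pi_gumbelLaw_argmax_inter_forall_le {N : ℕ} {w : Fin N → ℝ} (hw : ∀ j, 0 < w j)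
    (i : Fin N) (t : ℝ) :
    Measure.pi (fun j => gumbelLaw (w j)) ({x | ∀ j, j ≠ i → x j < x i} ∩ {x | ∀ j, x j ≤ t}) =
      Measure.pi (fun j => gumbelLaw (w j)) {x | ∀ j, j ≠ i → x j < x i} *
        Measure.pi (fun j => gumbelLaw (w j)) {x | ∀ j, x j ≤ t} := by
  have hS : 0 < ∑ j, w j := Finset.sum_pos (fun j _ => hw j) ⟨i, Finset.mem_univ i⟩
  rw [setOf_forall_ne_lt_inter_forall_le, pi_gumbelLaw_argmax_inter_le hw, pi_gumbelLaw_argmax hw,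
    pi_gumbelLaw_forall_le hw, ← ENNReal.ofReal_mul (div_pos (hw i) hS).le]

theorem stmt_18_general {Ω : Type*} [MeasurableSpace Ω] (μ : Measure Ω) [IsProbabilityMeasure μ]
    (N : ℕ) (G : Fin N → Ω → ℝ) (hGmeas : ∀ i, Measurable (G i))
    (hindep : iIndepFun G μ)
    (hgumbel : ∀ i t, μ {ω | G i ω ≤ t} = ENNReal.ofReal (Real.exp (-Real.exp (-t))))
    (w : Fin N → ℝ) (hw : ∀ i, 0 < w i) :
    (∀ i t, μ {ω | Real.log (w i) + G i ω ≤ t} =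
        ENNReal.ofReal (Real.exp (-(w i * Real.exp (-t))))) ∧
    (∀ i, μ {ω | ∀ j, j ≠ i → Real.log (w j) + G j ω < Real.log (w i) + G i ω} =
        ENNReal.ofReal (w i / ∑ j, w j)) ∧
    (∀ i t, μ ({ω | ∀ j, j ≠ i → Real.log (w j) + G j ω < Real.log (w i) + G i ω} ∩
                {ω | ∀ j, Real.log (w j) + G j ω ≤ t}) =
      μ {ω | ∀ j, j ≠ i → Real.log (w j) + G j ω < Real.log (w i) + G i ω} *
      μ {ω | ∀ j, Real.log (w j) + G j ω ≤ t}) := by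
  have hX : ∀ j, Measurable fun ω => log (w j) + G j ω := fun j => (hGmeas j).const_add _
  have hcdf : ∀ i t, μ {ω | log (w i) + G i ω ≤ t} = ENNReal.ofReal (gumbelCDF (w i) t) := by
    intro i t
    have hshift : {ω | log (w i) + G i ω ≤ t} = {ω | G i ω ≤ t - log (w i)} := by
      simp only [le_sub_iff_add_le']
    rw [hshift, hgumbel, ← gumbelCDF_one, gumbelCDF_one_sub_log (hw i)]
  have hlaw : μ.map (fun ω j => log (w j) + G j ω) = Measure.pi fun j => gumbelLaw (w j) := by
    have := fun j => isProbabilityMeasure_gumbelLaw (hw j)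
    rw [(hindep.comp _ fun j => measurable_const_add (log (w j))).map_fun_eq_pi_map
      fun j => (hX j).aemeasurable]
    congr with j : 1
    refine Measure.ext_of_Iic _ _ fun t => ?_
    rw [Measure.map_apply (hX j) measurableSet_Iic, gumbelLaw_Iic (hw j)]
    exact hcdf j t
  have hP : ∀ s, MeasurableSet s → μ ((fun ω j => log (w j) + G j ω) ⁻¹' s) =
      Measure.pi (fun j => gumbelLaw (w j)) s := fun s hs => by
    rw [← hlaw, Measure.map_apply (measurable_pi_lambda _ hX) hs]
  refine ⟨hcdf, fun i => ?_, fun i t => ?_⟩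
  · rw [← pi_gumbelLaw_argmax hw i, ← hP _ (measurableSet_setOf_forall_ne_lt i)]
    rfl
  · have h := pi_gumbelLaw_argmax_inter_forall_le hw i t
    rwa [← hP _ ((measurableSet_setOf_forall_ne_lt i).inter (measurableSet_setOf_forall_le t)),
      ← hP _ (measurableSet_setOf_forall_ne_lt i), ← hP _ (measurableSet_setOf_forall_le t)] at h

/-- Gumbel shifting, argmax probability, and independence of max and argmax:
(1) `P(log w + G ≤ t) = exp (−w e^{−t})`;
(2) `P(i is the argmax of log w_j + G_j) = w i / ∑ j, w j`;
(3) the events "argmax = i" and "max ≤ t" are independent. -/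
theorem stmt_18 {Ω : Type*} [MeasurableSpace Ω] (μ : Measure Ω) [IsProbabilityMeasure μ]
    (N : ℕ) (hN : 0 < N) (G : Fin N → Ω → ℝ) (hGmeas : ∀ i, Measurable (G i))
    (hindep : iIndepFun G μ)
    (hgumbel : ∀ i t, μ {ω | G i ω ≤ t} = ENNReal.ofReal (Real.exp (-Real.exp (-t))))
    (w : Fin N → ℝ) (hw : ∀ i, 0 < w i) :
    (∀ i t, μ {ω | Real.log (w i) + G i ω ≤ t} =
        ENNReal.ofReal (Real.exp (-(w i * Real.exp (-t))))) ∧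
    (∀ i, μ {ω | ∀ j, j ≠ i → Real.log (w j) + G j ω < Real.log (w i) + G i ω} =
        ENNReal.ofReal (w i / ∑ j, w j)) ∧
    (∀ i t, μ ({ω | ∀ j, j ≠ i → Real.log (w j) + G j ω < Real.log (w i) + G i ω} ∩
                {ω | ∀ j, Real.log (w j) + G j ω ≤ t}) =
      μ {ω | ∀ j, j ≠ i → Real.log (w j) + G j ω < Real.log (w i) + G i ω} *
      μ {ω | ∀ j, Real.log (w j) + G j ω ≤ t}) :=
  stmt_18_general μ N G hGmeas hindep hgumbel w hw
end
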